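/- In the GNS representation of the noncommutative torus, conjugation by J₀ maps the algebra into its commutant: for all a, b in A_θ, the operators π(a) and J₀π(b)*J₀⁻¹ commute on ℓ²(ℤ²). -/

import Mathlib

/- STATEMENT 4: In the GNS representation of the noncommutative torus, conjugation
by J₀ maps the algebra into its commutant: for all a, b ∈ A_θ, the operators π(a)
and J₀π(b)*J₀⁻¹ commute on ℓ²(ℤ²).

Concrete model on V = (ℤ×ℤ → ℂ): π is determined by
  π(U₁)ε_{k,l} = ε_{k+1,l},  π(U₂)ε_{k,l} = e^{2πikθ}ε_{k,l+1},
so the monomial π(U₁^kU₂^l) acts by (wA θ (k,l) f)(q) = e^{2πiθ(q₁-k)l} f(q₁-k,q₂-l).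
J₀ is the antilinear Tomita conjugation ε_{k,l} ↦ e^{2πiθkl} ε_{-k,-l} (the phase is
forced by J₀(xΩ) = x*Ω for x = U₁^kU₂^l).  A direct computation gives
  J₀ π(U₁^mU₂^n)* J₀⁻¹ : ε_{p,q} ↦ e^{2πiθ(q+n)m} ε_{p+m,q+n},
i.e. the operator (wOp θ (m,n) f)(q) = e^{2πiθq₂m} f(q₁-m,q₂-n).  Since J₀ is
antilinear, for a general b = Σ β_{mn} U₁^mU₂^n one has
J₀π(b)*J₀⁻¹ = Σ β_{mn} · (J₀ π(U₁^mU₂^n)* J₀⁻¹).  The theorem states that π(a)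
commutes with J₀π(b)*J₀⁻¹ for all a, b in the (algebraic) noncommutative torus. -/

open Complex in
/-- the operator `π(U₁^k U₂^l)` on the GNS space -/
noncomputable def wA (θ : ℝ) (p : ℤ × ℤ) : Module.End ℂ ((ℤ × ℤ) → ℂ) where
  toFun f := fun q =>
    Complex.exp (2 * Real.pi * Complex.I * θ * (q.1 - p.1) * p.2) * f (q.1 - p.1, q.2 - p.2)
  map_add' f g := by funext q; simp [mul_add]
  map_smul' c f := by funext q; simp [smul_eq_mul]; ring

open Complex in
/-- the operator `J₀ π(U₁^m U₂^n)* J₀⁻¹` on the GNS space -/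
noncomputable def wOp (θ : ℝ) (p : ℤ × ℤ) : Module.End ℂ ((ℤ × ℤ) → ℂ) where
  toFun f := fun q =>
    Complex.exp (2 * Real.pi * Complex.I * θ * q.2 * p.1) * f (q.1 - p.1, q.2 - p.2)
  map_add' f g := by funext q; simp [mul_add]
  map_smul' c f := by funext q; simp [smul_eq_mul]; ring

theorem Commute.finsuppSum_smul {R A ι κ : Type*} [Semiring R] [Semiring A] [Module R A]
    [IsScalarTower R A A] [SMulCommClass R A A] {x : ι → A} {y : κ → A}
    (h : ∀ i j, Commute (x i) (y j)) (α : ι →₀ R) (β : κ →₀ R) :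
    Commute (α.sum fun i c => c • x i) (β.sum fun j c => c • y j) :=
  Commute.sum_left _ _ _ fun i _ => Commute.sum_right _ _ _ fun j _ =>
    ((h i j).smul_left _).smul_right _

section

variable (θ : ℝ) (p : ℤ × ℤ) (f : (ℤ × ℤ) → ℂ) (q : ℤ × ℤ)

theorem wA_apply : wA θ p f q =
    Complex.exp (2 * Real.pi * Complex.I * θ * (q.1 - p.1) * p.2) * f (q.1 - p.1, q.2 - p.2) :=
  rfl

theorem wOp_apply : wOp θ p f q =
    Complex.exp (2 * Real.pi * Complex.I * θ * q.2 * p.1) * f (q.1 - p.1, q.2 - p.2) :=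
  rfl

end

theorem commute_wA_wOp (θ : ℝ) (p r : ℤ × ℤ) : Commute (wA θ p) (wOp θ r) := by
  ext f q
  simp only [Module.End.mul_apply, wA_apply, wOp_apply, ← mul_assoc, ← Complex.exp_add,
    sub_right_comm _ r.1 p.1, sub_right_comm _ r.2 p.2]
  -- both composites carry the phase `θ ((q₁ - p₁) p₂ + (q₂ - p₂) r₁)`
  congr 2
  push_cast
  ring

theorem stmt4 (θ : ℝ)
    -- coefficients of a = Σ α_{kl} U₁^kU₂^l and b = Σ β_{mn} U₁^mU₂^n in A_θ
    (α β : (ℤ × ℤ) →₀ ℂ) :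
    Commute
      (α.sum fun p c => c • wA θ p)          -- π(a)
      (β.sum fun p c => c • wOp θ p)         -- J₀ π(b)* J₀⁻¹
      := by
  exact Commute.finsuppSum_smul (commute_wA_wOp θ) α β
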